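/- (Covariance property.) Then the Lamb shift matrix commutes with the Hamiltonian, [δH, H] = 0, and the dissipator commutes with the derivation generated by H: G([H, ρ]) = [H, G(ρ)] for all ρ ∈ M_d(ℂ). -/

import Mathlib

/-!
If `[H, A] = ω A` and `[H, B] = -ω B`, the Leibniz rule for `[H, ·]` makes the weights add, so
`[H, B A] = 0` and `[H, A ρ B] = A [H, ρ] B`. Since `H` is self-adjoint and `ω_b` real,
`S_b*` has weight `-ω_b = -ω_a`; hence every pair `(a, b)` with `ω_a = ω_b` contributes a term
`S_b* S_a` commuting with `H` to `δH`, and a term intertwining `[H, ·]` to `G`.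
-/

open Matrix

attribute [local instance] LieRing.ofAssociativeRing LieAlgebra.ofAssociativeAlgebra

section Eigenoperator

variable {K R : Type*} [CommRing K] [Ring R] [Algebra K R] {H A B : R} {w : K}

lemma lie_mul_eq_lie_mul_add_mul_lie (H A B : R) : ⁅H, A * B⁆ = ⁅H, A⁆ * B + A * ⁅H, B⁆ := by
  simp only [Ring.lie_def]
  noncomm_ring

lemma lie_mul_of_lie_eq_smul {v : K} (hA : ⁅H, A⁆ = v • A) (hB : ⁅H, B⁆ = w • B) :
    ⁅H, A * B⁆ = (v + w) • (A * B) := by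
  rw [lie_mul_eq_lie_mul_add_mul_lie, hA, hB, smul_mul_assoc, mul_smul_comm, add_smul]

lemma commute_mul_of_lie_eq_smul_neg (hA : ⁅H, A⁆ = w • A) (hB : ⁅H, B⁆ = -w • B) :
    Commute H (B * A) := by
  rw [commute_iff_lie_eq, lie_mul_of_lie_eq_smul hB hA, neg_add_cancel, zero_smul]

lemma lie_mul_mul_of_lie_eq_smul_neg (hA : ⁅H, A⁆ = w • A) (hB : ⁅H, B⁆ = -w • B) (ρ : R) :
    ⁅H, A * ρ * B⁆ = A * ⁅H, ρ⁆ * B := by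
  rw [lie_mul_eq_lie_mul_add_mul_lie, lie_mul_eq_lie_mul_add_mul_lie, hA, hB, add_mul,
    smul_mul_assoc, smul_mul_assoc, mul_smul_comm, neg_smul]
  abel

lemma lie_mul_mul_sub_smul_anticomm_of_lie_eq_smul_neg (hA : ⁅H, A⁆ = w • A)
    (hB : ⁅H, B⁆ = -w • B) (c : K) (ρ : R) :
    ⁅H, A * ρ * B - c • (B * A * ρ + ρ * (B * A))⁆ =
      A * ⁅H, ρ⁆ * B - c • (B * A * ⁅H, ρ⁆ + ⁅H, ρ⁆ * (B * A)) := by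
  have hBA := commute_iff_lie_eq.mp (commute_mul_of_lie_eq_smul_neg hA hB)
  rw [lie_sub, lie_smul c, lie_add, lie_mul_mul_of_lie_eq_smul_neg hA hB,
    lie_mul_eq_lie_mul_add_mul_lie, lie_mul_eq_lie_mul_add_mul_lie H ρ, hBA, zero_mul, mul_zero,
    zero_add, add_zero]

lemma lie_star_of_lie_eq_smul [StarRing K] [StarRing R] [StarModule K R]
    (hH : IsSelfAdjoint H) (hw : IsSelfAdjoint w) (hA : ⁅H, A⁆ = w • A) :
    ⁅H, star A⁆ = -w • star A := by
  have h := congrArg star hA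
  rw [Ring.lie_def, star_sub, star_mul, star_mul, hH.star_eq, star_smul, hw.star_eq] at h
  rw [Ring.lie_def, neg_smul, ← h, neg_sub]

end Eigenoperator

theorem stmt13 {d : ℕ} {ι : Type*} [Fintype ι]
    (H : Matrix (Fin d) (Fin d) ℂ) (hH : Hᴴ = H)
    (S : ι → Matrix (Fin d) (Fin d) ℂ) (ω : ι → ℝ)
    (hS : ∀ a, H * S a - S a * H = (ω a : ℂ) • S a)
    (ξ γ : ι → ι → ℂ)
    (δH : Matrix (Fin d) (Fin d) ℂ)
    (hδH : δH = ∑ a, ∑ b, if ω a = ω b then ξ b a • ((S b)ᴴ * S a) else 0)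
    (G : Matrix (Fin d) (Fin d) ℂ → Matrix (Fin d) (Fin d) ℂ)
    (hG : ∀ ρ, G ρ = ∑ a, ∑ b, if ω a = ω b then
        γ b a • (S a * ρ * (S b)ᴴ -
          (1 / 2 : ℂ) • ((S b)ᴴ * S a * ρ + ρ * ((S b)ᴴ * S a)))
      else 0) :
    δH * H = H * δH ∧
    ∀ ρ : Matrix (Fin d) (Fin d) ℂ, G (H * ρ - ρ * H) = H * G ρ - G ρ * H := by
  simp only [← Ring.lie_def (R := Matrix (Fin d) (Fin d) ℂ)] at hS ⊢
  have hSstar (a b : ι) (hab : ω a = ω b) : ⁅H, (S b)ᴴ⁆ = -(ω a : ℂ) • (S b)ᴴ :=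
    hab ▸ lie_star_of_lie_eq_smul ((star_eq_conjTranspose H).trans hH)
      (Complex.conj_ofReal (ω b)) (hS b)
  refine ⟨?_, fun ρ => ?_⟩
  · rw [hδH]
    refine Commute.eq (Commute.sum_left _ _ _ fun a _ => Commute.sum_left _ _ _ fun b _ => ?_)
    split_ifs with hab
    · exact ((commute_mul_of_lie_eq_smul_neg (hS a) (hSstar a b hab)).smul_right _).symm
    · exact Commute.zero_left _
  · rw [hG, hG, lie_sum]
    refine Finset.sum_congr rfl fun a _ => ?_
    rw [lie_sum]
    refine Finset.sum_congr rfl fun b _ => ?_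
    split_ifs with hab
    · rw [lie_smul (γ b a),
        lie_mul_mul_sub_smul_anticomm_of_lie_eq_smul_neg (hS a) (hSstar a b hab)]
    · rw [lie_zero]
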